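/- For every positive integer c there exists a signed graph (G, σ) such that: (i) every triangle of (G, σ) has positive sign (equivalently, no induced subgraph of (G, σ) is switching equivalent to the all-negative triangle (K_3, −)); (ii) the underlying graph G contains no induced copy of the star K_{1,4}; and (iii) χ_b(G, σ) > c. -/

import Mathlib

/-!
The graph is the line graph of the shift graph `S_{2,n}` (vertices the pairs `a < b`, arcs
`(a, b) → (b, c)`), two arcs through a common pair being joined negatively iff they meet head to
tail. Like every line graph it has no induced `K_{1,3}`, and as `S_{2,n}` is triangle-free each of
its triangles consists of three arcs through one pair, which makes the triangle positive.
A walk of length `ℓ` in the subgraph of `S_{2,n}` formed by the arcs of one colour class lifts to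
a walk of arcs of sign `(-1)^ℓ`; balance of the class forces closed walks to have even length, so
the class is bipartite. Thus a balanced `c`-colouring gives a proper colouring of `S_{2,n}` by
`{0,1}^c`, impossible for `n > 2^(2^c)` since the sets `{colour of (a, b) : a < b}` are then pairwise
distinct subsets of `{0,1}^c`.
-/

open SimpleGraph

namespace SignedGS

variable {V : Type*}

/-- The sign of a walk in a signed graph: the product of the signs of its edges. -/
def walkSign {G : SimpleGraph V} (σ : Sym2 V → ℤˣ) {u v : V} (w : G.Walk u v) : ℤˣ :=
  (w.edges.map σ).prod

/-- `X` is a balanced set of `(G, σ)`: every cycle of the subgraph induced on `X`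
is positive. -/
def IsBalancedSet (G : SimpleGraph V) (σ : Sym2 V → ℤˣ) (X : Set V) : Prop :=
  ∀ ⦃v : V⦄ (w : G.Walk v v), w.IsCycle → (∀ u ∈ w.support, u ∈ X) → walkSign σ w = 1

/-- `(G, σ)` can be covered by `n` balanced sets. -/
def BalancedColorable (G : SimpleGraph V) (σ : Sym2 V → ℤˣ) (n : ℕ) : Prop :=
  ∃ f : V → Fin n, ∀ i : Fin n, IsBalancedSet G σ {v | f v = i}

/-- The balanced chromatic number of `(G, σ)`. -/
noncomputable def balancedChromNum (G : SimpleGraph V) (σ : Sym2 V → ℤˣ) : ℕ :=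
  sInf {n | BalancedColorable G σ n}

/-- The set `X ⊆ V` can be covered by `n` sets each of which is balanced in `(G, σ)`. -/
def BalancedColorableOn (G : SimpleGraph V) (σ : Sym2 V → ℤˣ) (X : Set V) (n : ℕ) : Prop :=
  ∃ f : V → Fin n, ∀ i : Fin n, IsBalancedSet G σ {v | v ∈ X ∧ f v = i}

/-- The balanced chromatic number of the signed subgraph of `(G, σ)` induced on `X`. -/
noncomputable def balancedChromNumOn (G : SimpleGraph V) (σ : Sym2 V → ℤˣ) (X : Set V) : ℕ :=
  sInf {n | BalancedColorableOn G σ X n}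

/-- `(G, σ)⁻` : the spanning subgraph of `G` consisting of the negative edges. -/
def negSubgraph (G : SimpleGraph V) (σ : Sym2 V → ℤˣ) : SimpleGraph V where
  Adj u v := G.Adj u v ∧ σ s(u, v) = -1
  symm := by
    constructor
    intro u v h
    refine ⟨h.1.symm, ?_⟩
    rw [Sym2.eq_swap]
    exact h.2
  loopless := by constructor; intro v h; exact G.loopless.irrefl v h.1

/-- Two signatures on `G` are switching equivalent. -/
def SwitchEquiv (G : SimpleGraph V) (σ σ' : Sym2 V → ℤˣ) : Prop :=
  ∃ η : V → ℤˣ, ∀ u v : V, G.Adj u v → σ' s(u, v) = η u * σ s(u, v) * η v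

/-- Every triangle of `(G, σ)` is positive. -/
def AllTrianglesPositive (G : SimpleGraph V) (σ : Sym2 V → ℤˣ) : Prop :=
  ∀ u v w : V, G.Adj u v → G.Adj v w → G.Adj u w →
    σ s(u, v) * σ s(v, w) * σ s(u, w) = 1

/-- `G` contains an induced copy of `F`. -/
def HasInducedCopy {W : Type*} (F : SimpleGraph W) (G : SimpleGraph V) : Prop :=
  ∃ f : W ↪ V, ∀ a b : W, G.Adj (f a) (f b) ↔ F.Adj a b

/-- The star `K_{1,m}` with center `0` and `m` leaves. -/
def starGraph (m : ℕ) : SimpleGraph (Fin (m + 1)) where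
  Adj a b := (a = 0 ∨ b = 0) ∧ a ≠ b
  symm := by constructor; rintro a b ⟨h1, h2⟩; exact ⟨h1.symm, h2.symm⟩
  loopless := by constructor; rintro a ⟨_, h⟩; exact h rfl

private def disjUnionAdj {W1 W2 : Type*} (F1 : SimpleGraph W1) (F2 : SimpleGraph W2) :
    W1 ⊕ W2 → W1 ⊕ W2 → Prop
  | .inl x, .inl y => F1.Adj x y
  | .inr x, .inr y => F2.Adj x y
  | _, _ => False

/-- The disjoint union `F1 + F2` of two graphs. -/
def disjUnion {W1 W2 : Type*} (F1 : SimpleGraph W1) (F2 : SimpleGraph W2) :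
    SimpleGraph (W1 ⊕ W2) where
  Adj := disjUnionAdj F1 F2
  symm := by
    constructor
    rintro (x | x) (y | y) h
    · exact F1.adj_symm h
    · exact h.elim
    · exact h.elim
    · exact F2.adj_symm h
  loopless := by
    constructor
    rintro (x | x) h
    · exact F1.loopless.irrefl x h
    · exact F2.loopless.irrefl x h

private def fullJoinAdj {W1 W2 : Type*} (G1 : SimpleGraph W1) (G2 : SimpleGraph W2) :
    W1 ⊕ W2 → W1 ⊕ W2 → Prop
  | .inl x, .inl y => G1.Adj x y
  | .inr x, .inr y => G2.Adj x y
  | _, _ => True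

/-- The full join `G1 ⋈ G2` of two vertex-disjoint graphs. -/
def fullJoin {W1 W2 : Type*} (G1 : SimpleGraph W1) (G2 : SimpleGraph W2) :
    SimpleGraph (W1 ⊕ W2) where
  Adj := fullJoinAdj G1 G2
  symm := by
    constructor
    rintro (x | x) (y | y) h
    · exact G1.adj_symm h
    · trivial
    · trivial
    · exact G2.adj_symm h
  loopless := by
    constructor
    rintro (x | x) h
    · exact G1.loopless.irrefl x h
    · exact G2.loopless.irrefl x h

/-- The linear forest with `l` components, the `i`-th component being a path
on `m i` vertices. -/
def linearForest (l : ℕ) (m : Fin l → ℕ) : SimpleGraph (Σ i : Fin l, Fin (m i)) where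
  Adj a b := a.1 = b.1 ∧ ((a.2 : ℕ) + 1 = (b.2 : ℕ) ∨ (b.2 : ℕ) + 1 = (a.2 : ℕ))
  symm := by constructor; rintro a b ⟨h1, h2⟩; exact ⟨h1.symm, h2.symm⟩
  loopless := by constructor; rintro a ⟨_, h⟩; omega

/-- `(G, σ)` has an induced subgraph switching equivalent to the all-negative `K_4`. -/
def HasSwitchK4Neg (G : SimpleGraph V) (σ : Sym2 V → ℤˣ) : Prop :=
  ∃ f : Fin 4 ↪ V, (∀ a b : Fin 4, a ≠ b → G.Adj (f a) (f b)) ∧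
    ∃ η : Fin 4 → ℤˣ, ∀ a b : Fin 4, a ≠ b → η a * σ s(f a, f b) * η b = -1

/-- `(G, σ)` has a triangle all of whose edges are negative. -/
def HasNegTriangle (G : SimpleGraph V) (σ : Sym2 V → ℤˣ) : Prop :=
  ∃ u v w : V, G.Adj u v ∧ G.Adj v w ∧ G.Adj u w ∧
    σ s(u, v) = -1 ∧ σ s(v, w) = -1 ∧ σ s(u, w) = -1

/-- `(G, σ)` has four vertices inducing a copy of `(K_4, M)`: a complete graph on four
vertices whose negative edges form a perfect matching. -/
def HasK4M (G : SimpleGraph V) (σ : Sym2 V → ℤˣ) : Prop :=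
  ∃ a b c d : V, a ≠ b ∧ a ≠ c ∧ a ≠ d ∧ b ≠ c ∧ b ≠ d ∧ c ≠ d ∧
    G.Adj a b ∧ G.Adj a c ∧ G.Adj a d ∧ G.Adj b c ∧ G.Adj b d ∧ G.Adj c d ∧
    σ s(a, b) = -1 ∧ σ s(c, d) = -1 ∧
    σ s(a, c) = 1 ∧ σ s(a, d) = 1 ∧ σ s(b, c) = 1 ∧ σ s(b, d) = 1

/-- The vertices of the shift graph `S_{k,n}`: strictly increasing `k`-sequences
with values in `{1, …, n}`. -/
def ShiftVertex (k n : ℕ) : Type :=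
  {s : Fin k → ℕ // StrictMono s ∧ ∀ i, s i ∈ Finset.Icc 1 n}

/-- `b` is obtained from `a` by shifting: `b = (a_2, …, a_k, t)` for some `t`. -/
def ShiftFollows {k n : ℕ} (a b : ShiftVertex k n) : Prop :=
  ∀ (i : ℕ) (h : i + 1 < k), b.1 ⟨i, Nat.lt_of_succ_lt h⟩ = a.1 ⟨i + 1, h⟩

/-- The shift graph `S_{k,n}`. -/
def shiftGraph (k n : ℕ) : SimpleGraph (ShiftVertex k n) where
  Adj a b := a ≠ b ∧ (ShiftFollows a b ∨ ShiftFollows b a)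
  symm := by constructor; rintro a b ⟨h1, h2⟩; exact ⟨h1.symm, h2.symm⟩
  loopless := by constructor; rintro a ⟨h, _⟩; exact h rfl


section WalkSign

variable {G : SimpleGraph V} (σ : Sym2 V → ℤˣ)

@[simp] lemma walkSign_nil {u : V} : walkSign σ (Walk.nil : G.Walk u u) = 1 := rfl

@[simp] lemma walkSign_cons {u v x : V} (h : G.Adj u v) (w : G.Walk v x) :
    walkSign σ (Walk.cons h w) = σ s(u, v) * walkSign σ w := by
  simp [walkSign]

@[simp] lemma walkSign_append {u v x : V} (w₁ : G.Walk u v) (w₂ : G.Walk v x) :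
    walkSign σ (w₁.append w₂) = walkSign σ w₁ * walkSign σ w₂ := by
  simp [walkSign, Walk.edges_append]

variable {σ}

/-- A closed walk that is not a cycle either backtracks along a single edge or splits off a
shorter nontrivial closed subwalk, so positivity of cycles propagates to all closed walks. -/
theorem IsBalancedSet.walkSign_eq_one {X : Set V} (hX : IsBalancedSet G σ X) {u : V}
    (c : G.Walk u u) (hc : ∀ x ∈ c.support, x ∈ X) : walkSign σ c = 1 := by
  induction hl : c.length using Nat.strong_induction_on generalizing u with
  | _ L ih =>
  cases c with
  | nil => rfl
  | @cons _ v _ h p =>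
    by_cases hp : p.IsPath
    · by_cases he : s(u, v) ∈ p.edges
      · rw [Sym2.eq_swap] at he
        rw [hp.eq_adj_toWalk_of_mem_edges he]
        simp [SimpleGraph.Adj.toWalk, Sym2.eq_swap (a := v), Int.units_mul_self]
      · exact hX _ ((Walk.cons_isCycle_iff p h).2 ⟨hp, he⟩) hc
    · obtain ⟨x, q, ⟨r₁, r₂, rfl⟩, hq⟩ : ∃ x, ∃ q : G.Walk x x, q.IsSubwalk p ∧ ¬ q.Nil := by
        simpa [Walk.isPath_iff_isSubwalk_imp_nil] using hp
      have hlen := q.not_nil_iff_lt_length.1 hq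
      simp only [Walk.length_cons, Walk.length_append] at hl
      simp only [Walk.support_cons, List.mem_cons, Walk.mem_support_append_iff] at hc
      have hq1 : walkSign σ q = 1 := ih _ (by omega) q (fun y hy => hc y (by tauto)) rfl
      have hrest : walkSign σ (Walk.cons h (r₁.append r₂)) = 1 :=
        ih _ (by simp only [Walk.length_cons, Walk.length_append]; omega) _ (fun y hy => hc y (by
          simp only [Walk.support_cons, List.mem_cons, Walk.mem_support_append_iff] at hy; tauto)) rfl
      simpa [hq1] using hrest

end WalkSign

lemma BalancedColorable.mono {G : SimpleGraph V} {σ : Sym2 V → ℤˣ} {k l : ℕ} (hkl : k ≤ l)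
    (h : BalancedColorable G σ k) : BalancedColorable G σ l := by
  obtain ⟨f, hf⟩ := h
  refine ⟨fun v => Fin.castLE hkl (f v), fun i v w hw hwX => hf (f v) w hw fun x hx => ?_⟩
  exact Fin.castLE_injective hkl ((hwX x hx).trans (hwX v w.start_mem_support).symm)

lemma balancedColorable_card [Fintype V] (G : SimpleGraph V) (σ : Sym2 V → ℤˣ) :
    BalancedColorable G σ (Fintype.card V) := by
  refine ⟨Fintype.equivFin V, fun i v w hw hwX => absurd ?_ (w.adj_snd hw.not_nil).ne⟩
  have hsnd := List.mem_of_mem_tail (w.snd_mem_tail_support hw.not_nil)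
  exact (Fintype.equivFin V).injective ((hwX v w.start_mem_support).trans (hwX _ hsnd).symm)

theorem lt_balancedChromNum [Fintype V] {G : SimpleGraph V} {σ : Sym2 V → ℤˣ} {c : ℕ}
    (h : ¬ BalancedColorable G σ c) : c < balancedChromNum G σ := by
  by_contra! hle
  exact h (BalancedColorable.mono hle (Nat.sInf_mem (s := {n | BalancedColorable G σ n})
    ⟨_, balancedColorable_card G σ⟩))

/-- A loopless oriented multigraph on the vertex set `P`, given by its arcs `E`. -/
structure OrientedGraph (E P : Type*) where
  tail : E → P
  head : E → P
  tail_ne_head : ∀ e, tail e ≠ head e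

namespace OrientedGraph

variable {E P : Type*} (D : OrientedGraph E P)

def Incident (e : E) (p : P) : Prop := D.tail e = p ∨ D.head e = p

def lineGraph : SimpleGraph E where
  Adj e f := e ≠ f ∧ ∃ p, D.Incident e p ∧ D.Incident f p
  symm := ⟨fun _ _ ⟨hne, p, he, hf⟩ => ⟨hne.symm, p, hf, he⟩⟩
  loopless := ⟨fun _ h => h.1 rfl⟩

def arcGraph (X : Set E) : SimpleGraph P where
  Adj p q := ∃ e ∈ X, (D.tail e = p ∧ D.head e = q) ∨ (D.tail e = q ∧ D.head e = p)
  symm := ⟨fun _ _ ⟨e, he, h⟩ => ⟨e, he, h.symm⟩⟩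
  loopless := ⟨fun _ ⟨e, _, h⟩ =>
    D.tail_ne_head e (by rcases h with ⟨h₁, h₂⟩ | ⟨h₁, h₂⟩ <;> rw [h₁, h₂])⟩

variable [DecidableEq P]

def lineSign : Sym2 E → ℤˣ :=
  Sym2.lift ⟨fun e f => if D.head e = D.tail f ∨ D.head f = D.tail e then -1 else 1,
    fun e f => by simp only [or_comm]⟩

def endSign (e : E) (p : P) : ℤˣ := if D.head e = p then -1 else 1

variable {D}

lemma endSign_mul_self (e : E) (p : P) : D.endSign e p * D.endSign e p = 1 :=
  Int.units_mul_self _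

lemma endSign_tail_mul_endSign_head (e : E) :
    D.endSign e (D.tail e) * D.endSign e (D.head e) = -1 := by
  simp [endSign, (D.tail_ne_head e).symm]

omit [DecidableEq P] in
lemma ends_of_incident_of_ne {e : E} {p q : P} (hpq : p ≠ q) (hp : D.Incident e p)
    (hq : D.Incident e q) : (D.tail e = p ∧ D.head e = q) ∨ (D.tail e = q ∧ D.head e = p) := by
  rcases hp with hp | hp <;> rcases hq with hq | hq
  · exact absurd (hp.symm.trans hq) hpq
  · exact Or.inl ⟨hp, hq⟩
  · exact Or.inr ⟨hq, hp⟩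
  · exact absurd (hp.symm.trans hq) hpq

lemma lineSign_eq {e f : E} {p : P} (he : D.Incident e p) (hf : D.Incident f p) :
    D.lineSign s(e, f) = D.endSign e p * D.endSign f p := by
  have := D.tail_ne_head e
  have := D.tail_ne_head f
  rcases he with rfl | rfl <;> rcases hf with hf | hf <;>
    simp_all [lineSign, endSign, eq_comm]

lemma exists_walk_of_incident {e f : E} {p : P} (he : D.Incident e p) (hf : D.Incident f p) :
    ∃ W : D.lineGraph.Walk e f, (∀ x ∈ W.support, x = e ∨ x = f) ∧
      walkSign D.lineSign W = D.endSign e p * D.endSign f p := by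
  by_cases hef : e = f
  · subst hef
    exact ⟨.nil, by simp, (endSign_mul_self e p).symm⟩
  · refine ⟨(show D.lineGraph.Adj e f from ⟨hef, p, he, hf⟩).toWalk, by simp, ?_⟩
    simp [SimpleGraph.Adj.toWalk, lineSign_eq he hf]

/-- Lift `w` to the arcs it uses: a step `p → p'` along the arc `g` contributes the factor
`D.endSign g p * D.endSign g p' = -1`. -/
theorem exists_lineGraph_walk {X : Set E} {p q : P} (w : (D.arcGraph X).Walk p q)
    {e f : E} (heX : e ∈ X) (he : D.Incident e p) (hfX : f ∈ X) (hf : D.Incident f q) :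
    ∃ W : D.lineGraph.Walk e f, (∀ x ∈ W.support, x ∈ X) ∧
      walkSign D.lineSign W = (-1) ^ w.length * D.endSign e p * D.endSign f q := by
  induction w generalizing e with
  | nil =>
    obtain ⟨W, hW, hsign⟩ := exists_walk_of_incident he hf
    exact ⟨W, fun x hx => by rcases hW x hx with rfl | rfl <;> assumption, by simpa using hsign⟩
  | @cons p p' q hadj w ih =>
    obtain ⟨g, hgX, hg⟩ := id hadj
    have hgp : D.Incident g p := by rcases hg with ⟨h, -⟩ | ⟨-, h⟩ <;> simp [Incident, h]
    have hgp' : D.Incident g p' := by rcases hg with ⟨-, h⟩ | ⟨h, -⟩ <;> simp [Incident, h]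
    have hflip : D.endSign g p * D.endSign g p' = -1 := by
      rcases hg with ⟨rfl, rfl⟩ | ⟨rfl, rfl⟩
      · exact endSign_tail_mul_endSign_head g
      · rw [mul_comm]; exact endSign_tail_mul_endSign_head g
    obtain ⟨W₁, hW₁, hsign₁⟩ := exists_walk_of_incident he hgp
    obtain ⟨W₂, hW₂, hsign₂⟩ := ih hgX hgp' hf
    refine ⟨W₁.append W₂, fun x hx => ?_, ?_⟩
    · rcases (Walk.mem_support_append_iff _ _).1 hx with hx | hx
      · rcases hW₁ x hx with rfl | rfl <;> assumption
      · exact hW₂ x hx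
    · rw [walkSign_append, hsign₁, hsign₂, Walk.length_cons, pow_succ, ← hflip]
      ac_rfl

theorem arcGraph_colorable_two {X : Set E} (hX : IsBalancedSet D.lineGraph D.lineSign X) :
    (D.arcGraph X).Colorable 2 := by
  refine two_colorable_iff_forall_loop_even.2 fun p w => ?_
  cases w with
  | nil => exact Even.zero
  | cons hadj w' =>
    obtain ⟨e, heX, he⟩ : ∃ e ∈ X, D.Incident e p := by
      obtain ⟨e, heX, h | h⟩ := id hadj
      exacts [⟨e, heX, Or.inl h.1⟩, ⟨e, heX, Or.inr h.2⟩]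
    obtain ⟨W, hWX, hsign⟩ := exists_lineGraph_walk (.cons hadj w') heX he heX he
    rw [hX.walkSign_eq_one W hWX, mul_assoc, endSign_mul_self, mul_one] at hsign
    exact (neg_one_pow_eq_one_iff_even (by decide)).1 hsign.symm

theorem exists_coloring_of_balancedColorable {k : ℕ}
    (h : BalancedColorable D.lineGraph D.lineSign k) :
    ∃ φ : P → (Fin k → Fin 2), ∀ e, φ (D.tail e) ≠ φ (D.head e) := by
  obtain ⟨f, hf⟩ := h
  let C i := (arcGraph_colorable_two (hf i)).some
  exact ⟨fun p i => C i p, fun e he => (C (f e)).valid ⟨e, rfl, Or.inl ⟨rfl, rfl⟩⟩ (congrFun he _)⟩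

theorem allTrianglesPositive_lineSign
    (h : ∀ e f g, D.lineGraph.Adj e f → D.lineGraph.Adj f g → D.lineGraph.Adj e g →
      ∃ p, D.Incident e p ∧ D.Incident f p ∧ D.Incident g p) :
    AllTrianglesPositive D.lineGraph D.lineSign := by
  intro e f g hef hfg heg
  obtain ⟨p, he, hf, hg⟩ := h e f g hef hfg heg
  rw [lineSign_eq he hf, lineSign_eq hf hg, lineSign_eq he hg]
  calc _ = (D.endSign e p * D.endSign e p) * (D.endSign f p * D.endSign f p) *
        (D.endSign g p * D.endSign g p) := by ac_rfl
    _ = 1 := by simp only [endSign_mul_self, one_mul]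

omit [DecidableEq P] in
/-- Each of three leaves shares an end with the centre, so two of them share the same end. -/
theorem not_hasInducedCopy_star_lineGraph : ¬ HasInducedCopy (starGraph 4) D.lineGraph := by
  rintro ⟨f, hf⟩
  have hleaf : ∀ k : Fin 5, k ≠ 0 →
      D.Incident (f k) (D.tail (f 0)) ∨ D.Incident (f k) (D.head (f 0)) := by
    intro k hk
    obtain ⟨-, p, h0 | h0, hk⟩ := (hf 0 k).2 ⟨Or.inl rfl, hk.symm⟩ <;> subst h0
    exacts [Or.inl hk, Or.inr hk]
  have hsep : ∀ k l : Fin 5, k ≠ 0 → l ≠ 0 → k ≠ l →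
      ∀ p, D.Incident (f k) p → ¬ D.Incident (f l) p := by
    intro k l hk hl hkl p hkp hlp
    obtain ⟨hkl0, -⟩ := (hf k l).1 ⟨f.injective.ne hkl, p, hkp, hlp⟩
    tauto
  rcases hleaf 1 (by decide) with h1 | h1 <;> rcases hleaf 2 (by decide) with h2 | h2 <;>
    rcases hleaf 3 (by decide) with h3 | h3 <;>
    first
    | exact hsep 1 2 (by decide) (by decide) (by decide) _ h1 h2
    | exact hsep 1 3 (by decide) (by decide) (by decide) _ h1 h3
    | exact hsep 2 3 (by decide) (by decide) (by decide) _ h2 h3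

end OrientedGraph

abbrev IncTriple (n : ℕ) : Type := {x : Fin n × Fin n × Fin n // x.1 < x.2.1 ∧ x.2.1 < x.2.2}

/-- The shift graph `S_{2,n}` on the pairs `a < b`, the triple `a < b < c` being the arc
`(a, b) → (b, c)`; pairs that are not increasing are isolated vertices. -/
def shiftArcs (n : ℕ) : OrientedGraph (IncTriple n) (Fin n × Fin n) where
  tail t := (t.1.1, t.1.2.1)
  head t := (t.1.2.1, t.1.2.2)
  tail_ne_head t h := t.2.1.ne (congrArg Prod.fst h)

/-- Both coordinates increase along an arc, so a triangle `x → y → z`, `x → z` would force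
`y.1 = x.2 = z.1 = y.2`. -/
theorem shiftArcs_triangle_has_common_end {n : ℕ} (e f g : IncTriple n)
    (hef : (shiftArcs n).lineGraph.Adj e f) (hfg : (shiftArcs n).lineGraph.Adj f g)
    (heg : (shiftArcs n).lineGraph.Adj e g) :
    ∃ p, (shiftArcs n).Incident e p ∧ (shiftArcs n).Incident f p ∧ (shiftArcs n).Incident g p := by
  obtain ⟨-, p, hep, hfp⟩ := hef
  obtain ⟨-, q, hfq, hgq⟩ := hfg
  obtain ⟨-, r, her, hgr⟩ := heg
  by_cases hpq : p = q
  · exact ⟨p, hep, hfp, hpq ▸ hgq⟩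
  by_cases hpr : p = r
  · exact ⟨p, hep, hfp, hpr ▸ hgr⟩
  by_cases hqr : q = r
  · exact ⟨q, hqr ▸ her, hfq, hgq⟩
  have he := e.2
  have hf := f.2
  have hg := g.2
  rcases OrientedGraph.ends_of_incident_of_ne hpr hep her with ⟨rfl, rfl⟩ | ⟨rfl, rfl⟩ <;>
    rcases OrientedGraph.ends_of_incident_of_ne hpq hfp hfq with ⟨h₂, h₂'⟩ | ⟨h₂, h₂'⟩ <;>
    rcases OrientedGraph.ends_of_incident_of_ne hqr hgq hgr with ⟨h₃, h₃'⟩ | ⟨h₃, h₃'⟩ <;>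
    simp only [shiftArcs, Prod.ext_iff, Fin.ext_iff, Fin.lt_def] at h₂ h₂' h₃ h₃' he hf hg <;>
    omega

/-- `A b` collects the colours of the pairs `(a, b)`; for `a < b` the colour `φ (a, b)` lies in
`A b` but not in `A a`, as `φ (k, a) ≠ φ (a, b)` for every `k < a`. -/
theorem le_two_pow_card_of_shiftArcs_coloring {n : ℕ} {K : Type*} [Fintype K]
    (φ : Fin n × Fin n → K) (hφ : ∀ t, φ ((shiftArcs n).tail t) ≠ φ ((shiftArcs n).head t)) :
    n ≤ 2 ^ Fintype.card K := by
  classical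
  let A : Fin n → Finset K := fun b => (Finset.univ.filter (· < b)).image fun a => φ (a, b)
  have hA : Function.Injective A := by
    refine .of_lt_imp_ne fun a b hab hAB => ?_
    have : φ (a, b) ∈ A a := hAB ▸ Finset.mem_image_of_mem _ (by simpa using hab)
    obtain ⟨k, hk, hka⟩ := Finset.mem_image.1 this
    exact hφ ⟨(k, a, b), by simpa using hk, hab⟩ hka
  simpa using Fintype.card_le_of_injective A hA

theorem not_balancedColorable_shiftArcs (c : ℕ) :
    ¬ BalancedColorable (shiftArcs (2 ^ 2 ^ c + 1)).lineGraph
      (shiftArcs (2 ^ 2 ^ c + 1)).lineSign c := by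
  intro h
  obtain ⟨φ, hφ⟩ := OrientedGraph.exists_coloring_of_balancedColorable h
  have := le_two_pow_card_of_shiftArcs_coloring φ hφ
  simp at this

theorem stmt7_general (c : ℕ) :
    ∃ (V : Type) (_ : Fintype V) (G : SimpleGraph V) (σ : Sym2 V → ℤˣ),
      AllTrianglesPositive G σ ∧ ¬ HasInducedCopy (starGraph 4) G ∧
        c < balancedChromNum G σ :=
  ⟨IncTriple (2 ^ 2 ^ c + 1), inferInstance, _, _,
    OrientedGraph.allTrianglesPositive_lineSign shiftArcs_triangle_has_common_end,
    OrientedGraph.not_hasInducedCopy_star_lineGraph,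
    lt_balancedChromNum (not_balancedColorable_shiftArcs c)⟩

/-- {(K_3,−), K_{1,4}} is not a GS set. -/
theorem stmt7 (c : ℕ) (hc : 0 < c) :
    ∃ (V : Type) (_ : Fintype V) (G : SimpleGraph V) (σ : Sym2 V → ℤˣ),
      AllTrianglesPositive G σ ∧ ¬ HasInducedCopy (starGraph 4) G ∧
        c < balancedChromNum G σ :=
  stmt7_general c

end SignedGS
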